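/- arXiv:1011.4186 — 5 statements merged into one kernel-verified Lean document; each statement's English description precedes it below -/
import Mathlib

section
/- Let K be a field, let P ∈ K[X,Y] be a homogeneous polynomial of degree d ≥ 1, and let I = (Z^d − P(X,Y)) ⊆ K[X,Y,Z]. Fix positive integers a₁, a₂, a₃ and write a₃ = dk + t with 0 ≤ t < d. Then for every integer m and all homogeneous polynomials F, G, H ∈ K[X,Y,Z] of degrees m−a₁, m−a₂, m−a₃ respectively satisfying F·X^{a₁} + G·Y^{a₂} + H·Z^{a₃} ∈ I, there exist homogeneous polynomials f₁, f₂, f₃ ∈ K[X,Y,Z] of degrees m−t−a₁, m−t−a₂, m−t−dk with f₁·X^{a₁} + f₂·Y^{a₂} + f₃·P^k ∈ I, and homogeneous polynomials g₁, g₂, g₃ ∈ K[X,Y,Z] of degrees m−a₁, m−a₂, m−d(k+1) with g₁·X^{a₁} + g₂·Y^{a₂} + g₃·P^{k+1} ∈ I, such that F − (Z^t·f₁ + g₁) ∈ I, G − (Z^t·f₂ + g₂) ∈ I, and H − (f₃ + Z^{d−t}·g₃) ∈ I. -/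
/-!
View `K[X,Y,Z]` as `R[Z]` with `R = K[X,Y]`, in which `Z^d - P` is monic of degree `d`.
Reduce `F, G, H` modulo `Z^d - P` to `Z`-degree `< d` and split them as `F = Z^t f₁ + g₁`,
`G = Z^t f₂ + g₂`, `H = f₃ + Z^(d-t) g₃` with `f₁, f₂, f₃` of `Z`-degree `< d - t` and
`g₁, g₂, g₃` of `Z`-degree `< t`. Since `Z^(dk+t) ≡ P^k Z^t` and `Z^(d-t) Z^(dk+t) ≡ P^(k+1)`,
the syzygy becomes `Z^t A + B ≡ 0` with `A = f₁X^a₁ + f₂Y^a₂ + f₃P^k` of `Z`-degree `< d - t` and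
`B = g₁X^a₁ + g₂Y^a₂ + g₃P^(k+1)` of `Z`-degree `< t`. A multiple of a monic polynomial of degree
`d` that has degree `< d` is zero, so `A = B = 0`. Finally `Z^d - P` is homogeneous, so taking
homogeneous components of the appropriate degrees makes all the witnesses homogeneous.
-/

open MvPolynomial

/-- A multivariate polynomial is homogeneous of *integer* degree `n`: either it is the zero
polynomial (which is regarded as homogeneous of every degree), or `n` is a natural number
and the polynomial is homogeneous of that degree. -/
def HomogInt {K : Type*} [Field K] {σ : Type*} (F : MvPolynomial σ K) (n : ℤ) : Prop :=
  F = 0 ∨ ∃ m : ℕ, (m : ℤ) = n ∧ F.IsHomogeneous m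

namespace Polynomial

variable {R : Type*} [CommRing R]

theorem X_pow_mul_add_eq_zero_iff {t : ℕ} {A B : R[X]} (hB : B.degree < t) :
    X ^ t * A + B = 0 ↔ A = 0 ∧ B = 0 := by
  refine ⟨fun h => ?_, fun ⟨hA, hB⟩ => by simp [hA, hB]⟩
  have hA : A = 0 := by
    ext i
    have := congr_arg (coeff · (i + t)) h
    simpa [coeff_X_pow_mul, coeff_eq_zero_of_degree_lt
      (hB.trans_le (by exact_mod_cast Nat.le_add_left t i))] using this
  exact ⟨hA, by simpa [hA] using h⟩

theorem X_pow_mul_mem_degreeLT [Nontrivial R] {s t : ℕ} {A : R[X]} (hA : A ∈ degreeLT R s) :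
    X ^ t * A ∈ degreeLT R (s + t) := by
  rw [mem_degreeLT] at hA ⊢
  rw [mul_comm, degree_mul_X_pow, Nat.cast_add]
  exact WithBot.add_lt_add_right WithBot.coe_ne_bot hA

theorem exists_eq_X_pow_mul_add [Nontrivial R] {s t : ℕ} {x : R[X]}
    (hx : x ∈ degreeLT R (s + t)) :
    ∃ a ∈ degreeLT R s, ∃ b ∈ degreeLT R t, x = X ^ t * a + b := by
  refine ⟨x /ₘ X ^ t, ?_, x %ₘ X ^ t, ?_, by rw [add_comm, modByMonic_add_div]⟩
  · rw [mem_degreeLT] at hx ⊢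
    by_cases ha : x /ₘ X ^ t = 0
    · rw [ha, degree_zero]; exact WithBot.bot_lt_coe s
    have hx0 : x ≠ 0 := by rintro rfl; simp at ha
    rw [← natDegree_lt_iff_degree_lt ha, natDegree_divByMonic _ (monic_X_pow t), natDegree_X_pow]
    have hlt := (natDegree_lt_iff_degree_lt hx0).2 hx
    have hle : t ≤ x.natDegree := by
      rw [divByMonic_eq_zero_iff (monic_X_pow t), degree_X_pow, not_lt] at ha
      exact le_natDegree_of_coe_le_degree ha
    omega
  · rw [mem_degreeLT, ← degree_X_pow (R := R) t]
    exact degree_modByMonic_lt x (monic_X_pow t)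

theorem Monic.eq_zero_of_dvd_X_pow_mul_add [Nontrivial R] {s t : ℕ} {p A B : R[X]}
    (hp : p.Monic) (hdeg : p.degree = ↑(s + t)) (hA : A ∈ degreeLT R s)
    (hB : B ∈ degreeLT R t) (h : p ∣ X ^ t * A + B) : A = 0 ∧ B = 0 := by
  rw [← X_pow_mul_add_eq_zero_iff (mem_degreeLT.1 hB)]
  by_contra hne
  have hlt : X ^ t * A + B ∈ degreeLT R (s + t) :=
    add_mem (X_pow_mul_mem_degreeLT hA) (degreeLT_mono (by omega) hB)
  exact hp.not_dvd_of_degree_lt hne (hdeg ▸ mem_degreeLT.1 hlt) h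

theorem mul_C_mem_degreeLT {n : ℕ} {a : R[X]} (ha : a ∈ degreeLT R n) (r : R) :
    a * C r ∈ degreeLT R n := by
  rw [mul_comm, ← smul_eq_C_mul]
  exact Submodule.smul_mem _ r ha

theorem exists_splitting_of_mem_degreeLT [Nontrivial R] {c u v : R} {d k t : ℕ} (ht : t < d)
    {F G H : R[X]} (hF : F ∈ degreeLT R d) (hG : G ∈ degreeLT R d) (hH : H ∈ degreeLT R d)
    (h : X ^ d - C c ∣ F * C u + G * C v + H * X ^ (d * k + t)) :
    ∃ f₁ f₂ f₃ g₁ g₂ g₃ : R[X],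
      f₁ * C u + f₂ * C v + f₃ * C c ^ k = 0 ∧ g₁ * C u + g₂ * C v + g₃ * C c ^ (k + 1) = 0 ∧
      F = X ^ t * f₁ + g₁ ∧ G = X ^ t * f₂ + g₂ ∧ H = f₃ + X ^ (d - t) * g₃ := by
  obtain ⟨s, rfl⟩ := Nat.exists_eq_add_of_le ht.le
  rw [Nat.add_sub_cancel_left]
  rw [add_comm t s] at hF hG
  obtain ⟨f₁, hf₁, g₁, hg₁, rfl⟩ := exists_eq_X_pow_mul_add hF
  obtain ⟨f₂, hf₂, g₂, hg₂, rfl⟩ := exists_eq_X_pow_mul_add hG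
  obtain ⟨g₃, hg₃, f₃, hf₃, rfl⟩ := exists_eq_X_pow_mul_add hH
  have hdvd : X ^ (t + s) - C c ∣
      X ^ t * (f₁ * C u + f₂ * C v + f₃ * C c ^ k) +
        (g₁ * C u + g₂ * C v + g₃ * C c ^ (k + 1)) := by
    have := dvd_sub
      (dvd_sub h ((sub_dvd_pow_sub_pow (X ^ (t + s)) (C c) k).mul_left (f₃ * X ^ t)))
      ((sub_dvd_pow_sub_pow (X ^ (t + s)) (C c) (k + 1)).mul_left g₃)
    convert this using 1
    ring
  simp only [← map_pow] at hdvd ⊢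
  obtain ⟨hA, hB⟩ := (monic_X_pow_sub_C c (by omega)).eq_zero_of_dvd_X_pow_mul_add
    (by rw [degree_X_pow_sub_C (by omega), add_comm])
    (add_mem (add_mem (mul_C_mem_degreeLT hf₁ u) (mul_C_mem_degreeLT hf₂ v))
      (mul_C_mem_degreeLT hf₃ _))
    (add_mem (add_mem (mul_C_mem_degreeLT hg₁ u) (mul_C_mem_degreeLT hg₂ v))
      (mul_C_mem_degreeLT hg₃ _))
    hdvd
  exact ⟨f₁, f₂, f₃, g₁, g₂, g₃, hA, hB, rfl, rfl, add_comm _ _⟩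

theorem exists_splitting_of_dvd [Nontrivial R] {c u v : R} {d k t : ℕ} (ht : t < d)
    {F G H : R[X]} (h : X ^ d - C c ∣ F * C u + G * C v + H * X ^ (d * k + t)) :
    ∃ f₁ f₂ f₃ g₁ g₂ g₃ : R[X],
      f₁ * C u + f₂ * C v + f₃ * C c ^ k = 0 ∧ g₁ * C u + g₂ * C v + g₃ * C c ^ (k + 1) = 0 ∧
      X ^ d - C c ∣ F - (X ^ t * f₁ + g₁) ∧ X ^ d - C c ∣ G - (X ^ t * f₂ + g₂) ∧
      X ^ d - C c ∣ H - (f₃ + X ^ (d - t) * g₃) := by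
  set p : R[X] := X ^ d - C c
  have hp : p.Monic := monic_X_pow_sub_C c (by omega)
  have hred (x : R[X]) : x %ₘ p ∈ degreeLT R d := by
    rw [mem_degreeLT, ← degree_X_pow_sub_C (by omega) c]
    exact degree_modByMonic_lt x hp
  have h' : p ∣ F %ₘ p * C u + G %ₘ p * C v + H %ₘ p * X ^ (d * k + t) := by
    have := dvd_add (dvd_add (dvd_add h ((dvd_modByMonic_sub F p).mul_right (C u)))
      ((dvd_modByMonic_sub G p).mul_right (C v)))
      ((dvd_modByMonic_sub H p).mul_right (X ^ (d * k + t)))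
    convert this using 1
    ring
  obtain ⟨f₁, f₂, f₃, g₁, g₂, g₃, hf, hg, hF, hG, hH⟩ :=
    exists_splitting_of_mem_degreeLT ht (hred F) (hred G) (hred H) h'
  exact ⟨f₁, f₂, f₃, g₁, g₂, g₃, hf, hg, dvd_sub_comm.1 (hF ▸ dvd_modByMonic_sub F p),
    dvd_sub_comm.1 (hG ▸ dvd_modByMonic_sub G p), dvd_sub_comm.1 (hH ▸ dvd_modByMonic_sub H p)⟩

end Polynomial

namespace MvPolynomial

section LastVariable

variable (R : Type*) [CommRing R] (n : ℕ)

noncomputable def finSuccEquivLast :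
    MvPolynomial (Fin (n + 1)) R ≃ₐ[R] Polynomial (MvPolynomial (Fin n) R) :=
  (renameEquiv R (finSuccEquiv' (Fin.last n))).trans (optionEquivLeft R (Fin n))

variable {R n}

@[simp]
theorem finSuccEquivLast_X_last : finSuccEquivLast R n (X (Fin.last n)) = Polynomial.X := by
  simp [finSuccEquivLast, optionEquivLeft_X_none]

@[simp]
theorem finSuccEquivLast_X_castSucc (i : Fin n) :
    finSuccEquivLast R n (X (Fin.castSucc i)) = Polynomial.C (X i) := by
  simp [finSuccEquivLast, finSuccEquiv'_last_apply_castSucc, optionEquivLeft_X_some]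

@[simp]
theorem finSuccEquivLast_rename_castSucc (p : MvPolynomial (Fin n) R) :
    finSuccEquivLast R n (rename Fin.castSucc p) = Polynomial.C p := by
  induction p using MvPolynomial.induction_on with
  | C a => simp [finSuccEquivLast, optionEquivLeft_C]
  | add p q hp hq => simp [hp, hq]
  | mul_X p i hp => simp [hp]

theorem mem_span_X_last_pow_sub_iff {d : ℕ} {c : MvPolynomial (Fin n) R}
    {x : MvPolynomial (Fin (n + 1)) R} :
    x ∈ Ideal.span {X (Fin.last n) ^ d - rename Fin.castSucc c} ↔
      Polynomial.X ^ d - Polynomial.C c ∣ finSuccEquivLast R n x := by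
  rw [Ideal.mem_span_singleton, ← map_dvd_iff (finSuccEquivLast R n)]
  simp

theorem exists_splitting_of_mem_span [Nontrivial R] {d k t : ℕ} (ht : t < d)
    {c u v : MvPolynomial (Fin n) R} {F G H : MvPolynomial (Fin (n + 1)) R}
    (h : F * rename Fin.castSucc u + G * rename Fin.castSucc v +
        H * X (Fin.last n) ^ (d * k + t) ∈
          Ideal.span {X (Fin.last n) ^ d - rename Fin.castSucc c}) :
    ∃ f₁ f₂ f₃ g₁ g₂ g₃ : MvPolynomial (Fin (n + 1)) R,
      f₁ * rename Fin.castSucc u + f₂ * rename Fin.castSucc v +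
        f₃ * rename Fin.castSucc c ^ k = 0 ∧
      g₁ * rename Fin.castSucc u + g₂ * rename Fin.castSucc v +
        g₃ * rename Fin.castSucc c ^ (k + 1) = 0 ∧
      F - (X (Fin.last n) ^ t * f₁ + g₁) ∈
        Ideal.span {X (Fin.last n) ^ d - rename Fin.castSucc c} ∧
      G - (X (Fin.last n) ^ t * f₂ + g₂) ∈
        Ideal.span {X (Fin.last n) ^ d - rename Fin.castSucc c} ∧
      H - (f₃ + X (Fin.last n) ^ (d - t) * g₃) ∈
        Ideal.span {X (Fin.last n) ^ d - rename Fin.castSucc c} := by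
  obtain ⟨f₁, f₂, f₃, g₁, g₂, g₃, hf, hg, hF, hG, hH⟩ :=
    Polynomial.exists_splitting_of_dvd ht (by simpa [mem_span_X_last_pow_sub_iff] using h)
  refine ⟨(finSuccEquivLast R n).symm f₁, (finSuccEquivLast R n).symm f₂,
    (finSuccEquivLast R n).symm f₃, (finSuccEquivLast R n).symm g₁,
    (finSuccEquivLast R n).symm g₂, (finSuccEquivLast R n).symm g₃,
    (finSuccEquivLast R n).injective ?_, (finSuccEquivLast R n).injective ?_, ?_, ?_, ?_⟩
  · simpa using hf
  · simpa using hg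
  · simpa [mem_span_X_last_pow_sub_iff] using hF
  · simpa [mem_span_X_last_pow_sub_iff] using hG
  · simpa [mem_span_X_last_pow_sub_iff] using hH

end LastVariable

section HomogeneousComponentInt

attribute [local instance] gradedAlgebra

variable {σ R : Type*} [CommRing R]

theorem homogeneousComponent_mul_of_isHomogeneous {w : MvPolynomial σ R} {e : ℕ}
    (hw : w.IsHomogeneous e) (c : MvPolynomial σ R) (n : ℕ) :
    homogeneousComponent n (c * w) = if e ≤ n then homogeneousComponent (n - e) c * w else 0 := by
  simp only [← decomposition.decompose'_apply]
  exact DirectSum.coe_decompose_mul_of_right_mem (homogeneousSubmodule σ R) n hw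

theorem isHomogeneous_span_singleton {w : MvPolynomial σ R} {e : ℕ} (hw : w.IsHomogeneous e) :
    (Ideal.span {w}).IsHomogeneous (homogeneousSubmodule σ R) :=
  Ideal.homogeneous_span _ _ (by simpa using ⟨e, hw⟩)

noncomputable def homogeneousComponentInt (n : ℤ) : MvPolynomial σ R →ₗ[R] MvPolynomial σ R :=
  if 0 ≤ n then homogeneousComponent n.toNat else 0

theorem homogeneousComponentInt_apply (n : ℤ) (x : MvPolynomial σ R) :
    homogeneousComponentInt n x = if 0 ≤ n then homogeneousComponent n.toNat x else 0 := by
  unfold homogeneousComponentInt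
  split_ifs <;> rfl

theorem homogeneousComponentInt_mul_of_isHomogeneous {w : MvPolynomial σ R} {e : ℕ}
    (hw : w.IsHomogeneous e) {n n' : ℤ} (h : n = n' + e) (c : MvPolynomial σ R) :
    homogeneousComponentInt n (c * w) = homogeneousComponentInt n' c * w := by
  simp only [homogeneousComponentInt_apply, homogeneousComponent_mul_of_isHomogeneous hw]
  split_ifs
  · rw [show n.toNat - e = n'.toNat by omega]
  all_goals first | omega | rw [zero_mul]

theorem homogeneousComponentInt_mem_of_mem {I : Ideal (MvPolynomial σ R)}
    (hI : I.IsHomogeneous (homogeneousSubmodule σ R)) {x : MvPolynomial σ R} (hx : x ∈ I)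
    (n : ℤ) :
    homogeneousComponentInt n x ∈ I := by
  unfold homogeneousComponentInt
  split_ifs
  · exact homogeneousComponent_mem_of_mem hI hx _
  · exact I.zero_mem

theorem homogeneousComponentInt_syzygy_mem {I : Ideal (MvPolynomial σ R)}
    (hI : I.IsHomogeneous (homogeneousSubmodule σ R)) {x₁ x₂ x₃ w₁ w₂ w₃ : MvPolynomial σ R}
    {e₁ e₂ e₃ : ℕ} (hw₁ : w₁.IsHomogeneous e₁) (hw₂ : w₂.IsHomogeneous e₂)
    (hw₃ : w₃.IsHomogeneous e₃) (n : ℤ) {n₁ n₂ n₃ : ℤ} (h₁ : n = n₁ + e₁) (h₂ : n = n₂ + e₂)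
    (h₃ : n = n₃ + e₃) (hx : x₁ * w₁ + x₂ * w₂ + x₃ * w₃ ∈ I) :
    homogeneousComponentInt n₁ x₁ * w₁ + homogeneousComponentInt n₂ x₂ * w₂ +
      homogeneousComponentInt n₃ x₃ * w₃ ∈ I := by
  have := homogeneousComponentInt_mem_of_mem hI hx n
  rwa [map_add, map_add, homogeneousComponentInt_mul_of_isHomogeneous hw₁ h₁,
    homogeneousComponentInt_mul_of_isHomogeneous hw₂ h₂,
    homogeneousComponentInt_mul_of_isHomogeneous hw₃ h₃] at this

end HomogeneousComponentInt

end MvPolynomial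

section HomogInt

open MvPolynomial

attribute [local instance] MvPolynomial.gradedAlgebra

variable {K σ : Type*} [Field K]

theorem homogInt_homogeneousComponentInt (n : ℤ) (x : MvPolynomial σ K) :
    HomogInt (homogeneousComponentInt n x) n := by
  rw [homogeneousComponentInt_apply]
  split_ifs with hn
  · exact Or.inr ⟨n.toNat, Int.toNat_of_nonneg hn, homogeneousComponent_isHomogeneous _ _⟩
  · exact Or.inl rfl

theorem HomogInt.homogeneousComponentInt_eq {x : MvPolynomial σ K} {n : ℤ}
    (hx : HomogInt x n) :
    homogeneousComponentInt n x = x := by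
  rcases hx with rfl | ⟨n, rfl, hx⟩
  · exact map_zero _
  · rw [homogeneousComponentInt_apply, if_pos (Int.natCast_nonneg n), Int.toNat_natCast,
      homogeneousComponent_of_mem ((mem_homogeneousSubmodule _ _).2 hx), if_pos rfl]

theorem HomogInt.sub_mul_add_mem {I : Ideal (MvPolynomial σ K)}
    (hI : I.IsHomogeneous (homogeneousSubmodule σ K)) {F w x y : MvPolynomial σ K} {e : ℕ}
    {n n' : ℤ} (hF : HomogInt F n) (hw : w.IsHomogeneous e) (h : n = n' + e)
    (hx : F - (w * x + y) ∈ I) :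
    F - (w * homogeneousComponentInt n' x + homogeneousComponentInt n y) ∈ I := by
  have := homogeneousComponentInt_mem_of_mem hI hx n
  rwa [map_sub, map_add, hF.homogeneousComponentInt_eq, mul_comm w,
    homogeneousComponentInt_mul_of_isHomogeneous hw h, mul_comm] at this

end HomogInt

theorem splitting_lemma_general (K : Type*) [Field K] (d : ℕ)
    (P : MvPolynomial (Fin 2) K) (hP : P.IsHomogeneous d)
    (a₁ a₂ a₃ k t : ℕ)
    (hkt : a₃ = d * k + t) (ht : t < d)
    (Q : MvPolynomial (Fin 3) K) (hQ : Q = rename Fin.castSucc P)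
    (I : Ideal (MvPolynomial (Fin 3) K)) (hI : I = Ideal.span {X 2 ^ d - Q})
    (m : ℤ) (F G H : MvPolynomial (Fin 3) K)
    (hF : HomogInt F (m - a₁)) (hG : HomogInt G (m - a₂)) (hH : HomogInt H (m - a₃))
    (hsyz : F * X 0 ^ a₁ + G * X 1 ^ a₂ + H * X 2 ^ a₃ ∈ I) :
    ∃ f₁ f₂ f₃ g₁ g₂ g₃ : MvPolynomial (Fin 3) K,
      HomogInt f₁ (m - t - a₁) ∧ HomogInt f₂ (m - t - a₂) ∧
      HomogInt f₃ (m - t - d * k) ∧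
      f₁ * X 0 ^ a₁ + f₂ * X 1 ^ a₂ + f₃ * Q ^ k ∈ I ∧
      HomogInt g₁ (m - a₁) ∧ HomogInt g₂ (m - a₂) ∧
      HomogInt g₃ (m - d * (k + 1)) ∧
      g₁ * X 0 ^ a₁ + g₂ * X 1 ^ a₂ + g₃ * Q ^ (k + 1) ∈ I ∧
      F - (X 2 ^ t * f₁ + g₁) ∈ I ∧
      G - (X 2 ^ t * f₂ + g₂) ∈ I ∧
      H - (f₃ + X 2 ^ (d - t) * g₃) ∈ I := by
  subst hQ hI hkt
  have hPd : (rename Fin.castSucc P).IsHomogeneous d := hP.rename_isHomogeneous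
  have hI := isHomogeneous_span_singleton ((isHomogeneous_X_pow (2 : Fin 3) d).sub hPd)
  obtain ⟨f₁, f₂, f₃, g₁, g₂, g₃, hf, hg, hF', hG', hH'⟩ :=
    exists_splitting_of_mem_span (n := 2) (u := X 0 ^ a₁) (v := X 1 ^ a₂) ht
      (by simpa using hsyz)
  simp only [map_pow, rename_X, Fin.castSucc_zero, Fin.castSucc_one, Fin.reduceLast]
    at hf hg hF' hG' hH'
  refine ⟨homogeneousComponentInt (m - t - a₁) f₁, homogeneousComponentInt (m - t - a₂) f₂,
    homogeneousComponentInt (m - t - d * k) f₃, homogeneousComponentInt (m - a₁) g₁,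
    homogeneousComponentInt (m - a₂) g₂, homogeneousComponentInt (m - d * (k + 1)) g₃,
    homogInt_homogeneousComponentInt _ _, homogInt_homogeneousComponentInt _ _,
    homogInt_homogeneousComponentInt _ _, ?_, homogInt_homogeneousComponentInt _ _,
    homogInt_homogeneousComponentInt _ _, homogInt_homogeneousComponentInt _ _, ?_, ?_, ?_, ?_⟩
  · exact homogeneousComponentInt_syzygy_mem hI (isHomogeneous_X_pow _ _)
      (isHomogeneous_X_pow _ _) (hPd.pow k) (m - t) (by ring) (by ring) (by push_cast; ring)
      (hf ▸ Ideal.zero_mem _)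
  · exact homogeneousComponentInt_syzygy_mem hI (isHomogeneous_X_pow _ _)
      (isHomogeneous_X_pow _ _) (hPd.pow (k + 1)) m (by ring) (by ring) (by push_cast; ring)
      (hg ▸ Ideal.zero_mem _)
  · exact hF.sub_mul_add_mem hI (isHomogeneous_X_pow _ _) (by ring) hF'
  · exact hG.sub_mul_add_mem hI (isHomogeneous_X_pow _ _) (by ring) hG'
  · rw [add_comm f₃] at hH'
    rw [add_comm (homogeneousComponentInt _ f₃)]
    rw [show m - ↑(d * k + t) = m - t - d * k by push_cast; ring] at hH
    exact hH.sub_mul_add_mem hI (isHomogeneous_X_pow _ _) (by push_cast [ht.le]; ring) hH'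

/-- Every homogeneous syzygy of `(X^{a₁}, Y^{a₂}, Z^{a₃})` modulo `(Z^d - P(X,Y))` comes from
syzygies of `(X^{a₁}, Y^{a₂}, P^k)` and of `(X^{a₁}, Y^{a₂}, P^{k+1})` (Lemma 2.1). -/
theorem splitting_lemma (K : Type*) [Field K] (d : ℕ) (hd : 1 ≤ d)
    (P : MvPolynomial (Fin 2) K) (hP : P.IsHomogeneous d)
    (a₁ a₂ a₃ k t : ℕ) (ha₁ : 0 < a₁) (ha₂ : 0 < a₂) (ha₃ : 0 < a₃)
    (hkt : a₃ = d * k + t) (ht : t < d)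
    (Q : MvPolynomial (Fin 3) K) (hQ : Q = rename Fin.castSucc P)
    (I : Ideal (MvPolynomial (Fin 3) K)) (hI : I = Ideal.span {X 2 ^ d - Q})
    (m : ℤ) (F G H : MvPolynomial (Fin 3) K)
    (hF : HomogInt F (m - a₁)) (hG : HomogInt G (m - a₂)) (hH : HomogInt H (m - a₃))
    (hsyz : F * X 0 ^ a₁ + G * X 1 ^ a₂ + H * X 2 ^ a₃ ∈ I) :
    ∃ f₁ f₂ f₃ g₁ g₂ g₃ : MvPolynomial (Fin 3) K,
      HomogInt f₁ (m - t - a₁) ∧ HomogInt f₂ (m - t - a₂) ∧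
      HomogInt f₃ (m - t - d * k) ∧
      f₁ * X 0 ^ a₁ + f₂ * X 1 ^ a₂ + f₃ * Q ^ k ∈ I ∧
      HomogInt g₁ (m - a₁) ∧ HomogInt g₂ (m - a₂) ∧
      HomogInt g₃ (m - d * (k + 1)) ∧
      g₁ * X 0 ^ a₁ + g₂ * X 1 ^ a₂ + g₃ * Q ^ (k + 1) ∈ I ∧
      F - (X 2 ^ t * f₁ + g₁) ∈ I ∧
      G - (X 2 ^ t * f₂ + g₂) ∈ I ∧
      H - (f₃ + X 2 ^ (d - t) * g₃) ∈ I :=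
  splitting_lemma_general K d P hP a₁ a₂ a₃ k t hkt ht Q hQ I hI m F G H hF hG hH hsyz
end

section
/- Let d ≥ 2 be an integer, let p be a prime number with p ≡ −1 (mod 2d), let K be a field of characteristic p, and set k = (p+1)/d − 1. If A, B, C ∈ K[X,Y] are homogeneous polynomials with deg A = deg B = (dk − d + 2)/2 and deg C = (dk − d)/2 such that A·X^p + B·Y^p + C·(X^d + Y^d)^{k+1} = 0 in K[X,Y], then A = B = C = 0. -/
/-!
Dehomogenize at `Y = 1`: the syzygy becomes `a X^p + b = -c q^(k+1)` with `q = X^d + 1`, which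
is separable since `p ∤ d`. As `X^p` has zero derivative, `q^k` divides the Wronskian
`W(a, b) = a f' - a' f` of `f = a X^p + b`; its degree is too small, so `W(a, b) = 0`, and since
`deg a, deg b < p` the polynomials `a`, `b` are proportional. Then `q^(k+1)` divides
`(λ X^p + μ) g` with `g ∈ {a, b}` and `(λ, μ) ≠ 0`. In characteristic `p` the factor `λ X^p + μ`
has at most one root, so `g` vanishes to order `k + 1` at `d - 1` roots of `q`, which its degree
does not allow.
-/

namespace Polynomial

theorem natDegree_eq_zero_of_derivative_eq_zero_of_lt {R : Type*} [CommRing R] [IsDomain R]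
    (p : ℕ) [CharP R p] (hp : p ≠ 0) {f : R[X]} (hf : derivative f = 0) (hdeg : f.natDegree < p) :
    f.natDegree = 0 := by
  rw [← expand_contract p hf hp, natDegree_expand] at hdeg ⊢
  exact mul_eq_zero_of_left
    (Nat.lt_one_iff.mp ((mul_lt_iff_lt_one_left (Nat.pos_of_ne_zero hp)).mp hdeg)) p

theorem pow_dvd_wronskian_of_pow_succ_dvd {R : Type*} [CommRing R] (p : ℕ) [CharP R p]
    {q a b : R[X]} {n : ℕ} (h : q ^ (n + 1) ∣ a * X ^ p + b) : q ^ n ∣ wronskian a b := by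
  have hder : derivative (a * X ^ p + b) = derivative a * X ^ p + derivative b := by
    simp [derivative_mul, derivative_X_pow]
  have key : wronskian a b = a * derivative (a * X ^ p + b) - derivative a * (a * X ^ p + b) := by
    rw [hder, wronskian]
    ring
  rw [key]
  exact ((pow_sub_one_dvd_derivative_of_pow_dvd h).mul_left a).sub
    (((pow_dvd_pow q n.le_succ).trans h).mul_left _)

variable {K : Type*} [Field K]

theorem exists_eq_C_mul_of_wronskian_eq_zero (p : ℕ) [CharP K p] (hp : p ≠ 0) {a b : K[X]}
    (hW : wronskian a b = 0) (ha : a.natDegree < p) (hb : b.natDegree < p) (hb0 : b ≠ 0) :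
    ∃ c : K, a = C c * b := by
  obtain ⟨a', b', g, hrel, rfl, rfl⟩ := UniqueFactorizationMonoid.exists_reduced_factors' a b hb0
  have hg : g ≠ 0 := left_ne_zero_of_mul hb0
  have hW' : wronskian a' b' = 0 := by
    have : wronskian (g * a') (g * b') = g ^ 2 * wronskian a' b' := by
      simp only [wronskian, derivative_mul]
      ring
    simpa [this, hg] using hW
  have hlt (x : K[X]) (hx : (g * x).natDegree < p) : x.natDegree < p :=
    (natDegree_le_natDegree ((degree_le_mul_left x hg).trans_eq (by rw [mul_comm]))).trans_lt hx
  obtain ⟨ha', hb'⟩ := hrel.isCoprime.wronskian_eq_zero_iff.mp hW'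
  have hu := eq_C_of_natDegree_eq_zero
    (natDegree_eq_zero_of_derivative_eq_zero_of_lt p hp ha' (hlt _ ha))
  have hv := eq_C_of_natDegree_eq_zero
    (natDegree_eq_zero_of_derivative_eq_zero_of_lt p hp hb' (hlt _ hb))
  rw [hv] at hb0
  rw [hu, hv]
  have hv0 : b'.coeff 0 ≠ 0 := fun h => hb0 (by simp [h])
  exact ⟨a'.coeff 0 / b'.coeff 0, by rw [mul_left_comm, ← C_mul, div_mul_cancel₀ _ hv0]⟩

theorem card_mul_le_natDegree_of_pow_dvd (S : Finset K) {f : K[X]} {n : ℕ} (hf : f ≠ 0)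
    (h : ∀ α ∈ S, (X - C α) ^ n ∣ f) : S.card * n ≤ f.natDegree := by
  have hprod : ∏ α ∈ S, (X - C α) ^ n ∣ f := Finset.prod_dvd_of_coprime
    (fun α _ β _ hne => (pairwise_coprime_X_sub_C Function.injective_id hne).pow) h
  simpa [natDegree_prod_of_monic S (fun α => (X - C α) ^ n) fun α _ => (monic_X_sub_C α).pow n]
    using natDegree_le_of_dvd hprod hf

theorem sub_one_mul_le_natDegree_of_pow_dvd_mul (S : Finset K) {h f : K[X]} {n : ℕ}
    (hroots : {α | h.IsRoot α}.Subsingleton) (hf : f ≠ 0)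
    (hdvd : ∀ α ∈ S, (X - C α) ^ n ∣ h * f) : (S.card - 1) * n ≤ f.natDegree := by
  classical
  have hcard : S.card - 1 ≤ (S.filter fun α => ¬h.IsRoot α).card := by
    have hsplit := S.card_filter_add_card_filter_not (fun α => h.IsRoot α)
    have hle : (S.filter fun α => h.IsRoot α).card ≤ 1 := Finset.card_le_one.mpr
      fun α hα β hβ => hroots (Finset.mem_filter.mp hα).2 (Finset.mem_filter.mp hβ).2
    omega
  refine (Nat.mul_le_mul_right n hcard).trans
    (card_mul_le_natDegree_of_pow_dvd _ hf fun α hα => ?_)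
  obtain ⟨hαS, hα⟩ := Finset.mem_filter.mp hα
  have hcop : IsCoprime (X - C α) h :=
    (irreducible_X_sub_C α).coprime_iff_not_dvd.mpr (mt dvd_iff_isRoot.mp hα)
  exact hcop.pow_left.dvd_of_dvd_mul_left (hdvd α hαS)

theorem sub_one_mul_le_natDegree_of_separable_pow_dvd {p : ℕ} (hp : p.Prime) [CharP K p]
    {q f : K[X]} {c₁ c₀ : K} {n : ℕ} (hq : q.Separable) (hc : c₁ ≠ 0 ∨ c₀ ≠ 0) (hf : f ≠ 0)
    (h : q ^ n ∣ (C c₁ * X ^ p + C c₀) * f) : (q.natDegree - 1) * n ≤ f.natDegree := by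
  classical
  have := Fact.mk hp
  let φ := algebraMap K (AlgebraicClosure K)
  have : CharP (AlgebraicClosure K) p := charP_of_injective_algebraMap φ.injective p
  have hroots : {α | (C (φ c₁) * X ^ p + C (φ c₀)).IsRoot α}.Subsingleton := by
    intro α hα β hβ
    simp only [Set.mem_ofPred_eq, IsRoot, eval_add, eval_mul, eval_C, eval_pow, eval_X] at hα hβ
    have hc₁ : φ c₁ ≠ 0 := by
      rintro h0
      rw [h0, zero_mul, zero_add, map_eq_zero] at hα
      exact hc.resolve_right (not_not.mpr hα) (by simpa using h0)
    exact frobenius_inj _ p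
      (mul_left_cancel₀ hc₁ (by simp only [frobenius_def]; linear_combination hα - hβ))
  set S := (q.map φ).roots.toFinset
  have hS : S.card = q.natDegree := by
    rw [Multiset.toFinset_card_of_nodup (nodup_roots hq.map),
      ← (IsAlgClosed.splits (q.map φ)).natDegree_eq_card_roots, natDegree_map]
  have key := sub_one_mul_le_natDegree_of_pow_dvd_mul S hroots (Polynomial.map_ne_zero hf)
    fun α hα => (pow_dvd_pow_of_dvd (dvd_iff_isRoot.mpr
      (isRoot_of_mem_roots (Multiset.mem_toFinset.mp hα))) n).trans
      (by simpa [Polynomial.map_pow] using Polynomial.map_dvd φ h)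
  rwa [hS, natDegree_map] at key

theorem eq_zero_of_separable_pow_dvd_mul_X_pow_add {p : ℕ} (hp : p.Prime) [CharP K p]
    {q a b : K[X]} {k N : ℕ} (hq : q.Separable) (h : q ^ (k + 1) ∣ a * X ^ p + b)
    (ha : a.natDegree ≤ N) (hb : b.natDegree ≤ N) (hNp : N < p) (hNk : 2 * N ≤ q.natDegree * k)
    (hNq : N < (q.natDegree - 1) * (k + 1)) : a = 0 ∧ b = 0 := by
  have hW : wronskian a b = 0 := by
    by_contra hW
    have hdvd := natDegree_le_of_dvd (pow_dvd_wronskian_of_pow_succ_dvd p h) hW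
    have hlt := natDegree_wronskian_lt_add hW
    rw [natDegree_pow, mul_comm] at hdvd
    omega
  by_cases hb0 : b = 0
  · subst hb0
    refine ⟨?_, rfl⟩
    by_contra ha0
    have := sub_one_mul_le_natDegree_of_separable_pow_dvd hp hq (c₁ := 1) (c₀ := 0)
      (Or.inl one_ne_zero) ha0 (by simpa [mul_comm] using h)
    omega
  · obtain ⟨c, rfl⟩ := exists_eq_C_mul_of_wronskian_eq_zero p hp.ne_zero hW (ha.trans_lt hNp)
      (hb.trans_lt hNp) hb0
    have := sub_one_mul_le_natDegree_of_separable_pow_dvd hp hq (c₁ := c) (c₀ := 1)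
      (Or.inr one_ne_zero) hb0 (by convert h using 1; rw [C_1]; ring)
    omega

theorem separable_X_pow_add_one {d : ℕ} (hd : (d : K) ≠ 0) : (X ^ d + 1 : K[X]).Separable := by
  simpa [sub_eq_add_neg] using separable_X_pow_sub_C (-1 : K) hd (by simp)

end Polynomial

namespace MvPolynomial.IsHomogeneous

variable {R : Type*} [CommSemiring R] {F : MvPolynomial (Fin 2) R} {n : ℕ}

theorem natDegree_aeval_X_one_le (hF : F.IsHomogeneous n) :
    (MvPolynomial.aeval ![Polynomial.X, (1 : Polynomial R)] F).natDegree ≤ n := by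
  rw [F.as_sum, map_sum (MvPolynomial.aeval ![Polynomial.X, (1 : Polynomial R)])]
  refine Polynomial.natDegree_sum_le_of_forall_le _ _ fun v hv => ?_
  have hdeg : v 0 + v 1 = n := by
    simpa [Finsupp.weight_apply, Finsupp.sum_fintype, Fin.sum_univ_two]
      using hF (mem_support_iff.mp hv)
  simp only [aeval_monomial, Finsupp.prod_fintype _ _ fun i => pow_zero _, Fin.prod_univ_two,
    Matrix.cons_val_zero, Matrix.cons_val_one, one_pow, mul_one, ← Polynomial.C_eq_algebraMap]
  exact (Polynomial.natDegree_C_mul_X_pow_le _ _).trans (by omega)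

theorem eq_zero_of_aeval_X_one_eq_zero (hF : F.IsHomogeneous n)
    (h : MvPolynomial.aeval ![Polynomial.X, (1 : Polynomial R)] F = 0) : F = 0 :=
  (Polynomial.homogenize_eq_of_isHomogeneous hF h).symm.trans (Polynomial.homogenize_zero n)

end MvPolynomial.IsHomogeneous

theorem exists_eq_two_mul_add_one_of_two_mul_dvd_succ {d p k : ℕ} (hd : 0 < d)
    (hpd : 2 * d ∣ p + 1) (hk : k = (p + 1) / d - 1) :
    ∃ s, k = 2 * s + 1 ∧ p + 1 = 2 * d * (s + 1) := by
  obtain ⟨t, ht⟩ := hpd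
  obtain ⟨s, rfl⟩ : ∃ s, t = s + 1 := ⟨t - 1, by rcases t with _ | t <;> simp_all⟩
  refine ⟨s, ?_, ht⟩
  rw [hk, ht, show 2 * d * (s + 1) = d * (2 * (s + 1)) by ring, Nat.mul_div_cancel_left _ hd]
  omega

open MvPolynomial

/-- The vanishing used in Step 2 of the proof of the main theorem: in characteristic
`p ≡ -1 (mod 2d)`, with `k = (p+1)/d - 1`, every homogeneous syzygy of
`(X^p, Y^p, (X^d+Y^d)^{k+1})` of total degree `(3dk+d)/2` (component degrees
`(dk-d+2)/2`, `(dk-d+2)/2`, `(dk-d)/2`) is trivial. -/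
theorem no_syzygy_of_higher_power (K : Type*) [Field K] (d : ℕ) (hd : 2 ≤ d)
    (p : ℕ) (hp : p.Prime) (hpd : 2 * d ∣ p + 1) [CharP K p]
    (k : ℕ) (hk : k = (p + 1) / d - 1)
    (A B C : MvPolynomial (Fin 2) K)
    (hA : A.IsHomogeneous ((d * k - d + 2) / 2)) (hB : B.IsHomogeneous ((d * k - d + 2) / 2))
    (hC : C.IsHomogeneous ((d * k - d) / 2))
    (hsyz : A * X 0 ^ p + B * X 1 ^ p + C * (X 0 ^ d + X 1 ^ d) ^ (k + 1) = 0) :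
    A = 0 ∧ B = 0 ∧ C = 0 := by
  obtain ⟨s, rfl, hps⟩ := exists_eq_two_mul_add_one_of_two_mul_dvd_succ (by omega) hpd hk
  have hdk : d * (2 * s + 1) = 2 * (d * s) + d := by ring
  rw [show (d * (2 * s + 1) - d + 2) / 2 = d * s + 1 by omega] at hA hB
  rw [show (d * (2 * s + 1) - d) / 2 = d * s by omega] at hC
  have hdK : (d : K) ≠ 0 := by
    rw [Ne, CharP.cast_eq_zero_iff K p]
    exact Nat.not_dvd_of_pos_of_lt (by omega) (by nlinarith)
  set q : Polynomial K := Polynomial.X ^ d + 1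
  have hq : q.Separable := Polynomial.separable_X_pow_add_one hdK
  have hqd : q.natDegree = d := Polynomial.natDegree_X_pow_add_C
  let dehom := aeval (R := K) ![Polynomial.X, (1 : Polynomial K)]
  have hsyz' : dehom A * Polynomial.X ^ p + dehom B = -(dehom C * q ^ (2 * s + 1 + 1)) := by
    have := congrArg dehom hsyz
    simp only [map_add, map_mul, map_pow, aeval_X, Matrix.cons_val_zero, Matrix.cons_val_one,
      one_pow, mul_one, map_zero, dehom] at this
    linear_combination this
  obtain ⟨ha, hb⟩ := Polynomial.eq_zero_of_separable_pow_dvd_mul_X_pow_add hp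
    hq (hsyz' ▸ (Dvd.intro_left _ rfl).neg_right)
    hA.natDegree_aeval_X_one_le hB.natDegree_aeval_X_one_le (by nlinarith) (by rw [hqd]; omega)
    (by rw [hqd]; zify [show 1 ≤ d by omega]; nlinarith)
  have hc : dehom C = 0 := by
    rw [ha, hb, zero_mul, zero_add, eq_comm, neg_eq_zero] at hsyz'
    exact (mul_eq_zero.mp hsyz').resolve_right (pow_ne_zero _ hq.ne_zero)
  exact ⟨hA.eq_zero_of_aeval_X_one_eq_zero ha, hB.eq_zero_of_aeval_X_one_eq_zero hb,
    hC.eq_zero_of_aeval_X_one_eq_zero hc⟩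
end

section
/- Let d ≥ 2 be an integer, let p be a prime number with p ≡ −1 (mod 2d), let K be a field of characteristic p, and set k = (p+1)/d − 1. If A, B, C ∈ K[X,Y] are homogeneous polynomials with deg A = deg B = (3dk+d)/2 − 1 − p and deg C = (dk+d)/2 − 1 such that A·X^p + B·Y^p + C·(X^d + Y^d)^k = 0 in K[X,Y] (a homogeneous syzygy of total degree (3dk+d)/2 − 1), then A = B = C = 0. -/
/-!
Put `p + 1 = 2dm`, so `k = 2m - 1`. Setting `X 0 = 1` turns the syzygy into
`a + b t^p + c (1 + t^d)^k = 0` in `K[t]` with `deg a ≤ dm - d < p` and `deg c < dm`, so the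
coefficients of `c (1 + t^d)^k` vanish in the degrees `dm - d < j ≤ dk < p`. Splitting `c` by the
residue of exponents mod `d`, each part `c_r` has degree `< m`, and `c_r (1 + t)^k` has `m`
consecutive vanishing coefficients, hence at most `k` nonzero ones. But it is divisible by
`(1 + t)^k` and has degree `< p`, while a nonzero polynomial of degree `< p` with `s` nonzero
coefficients has no nonzero root of multiplicity `≥ s`. So `c = 0`, and then `a = b = 0`.
-/

open Polynomial Finset

namespace Polynomial

theorem coeff_X_mul_derivative_sub_C_mul {R : Type*} [CommRing R] (g : R[X]) (n j : ℕ) :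
    (X * derivative g - C (n : R) * g).coeff j = ((j : R) - n) * g.coeff j := by
  cases j with
  | zero => simp
  | succ j => simp [coeff_X_mul, coeff_derivative]; ring

theorem rootMultiplicity_lt_card_support {R : Type*} [CommRing R] [IsDomain R] (p : ℕ)
    [CharP R p] {g : R[X]} (hg : g ≠ 0) (hgp : g.natDegree < p) {x : R} (hx : x ≠ 0) :
    g.rootMultiplicity x < #g.support := by
  induction hn : #g.support using Nat.strong_induction_on generalizing g with
  | _ n ih =>
  subst hn
  by_cases hmono : #g.support ≤ 1
  · obtain ⟨N, a, rfl⟩ := card_support_le_one_iff_monomial.mp hmono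
    have ha : a ≠ 0 := by simpa using hg
    rw [rootMultiplicity_eq_zero (by simp [ha, hx])]
    exact card_pos.mpr (support_nonempty.mpr hg)
  obtain ⟨i, hi, hiN⟩ : ∃ i ∈ g.support, i ≠ g.natDegree := by
    by_contra! h
    exact hmono (card_le_one.mpr fun a ha b hb => (h a ha).trans (h b hb).symm)
  -- `X g' - N g` kills the leading term and lowers the multiplicity at `x` by at most one.
  set h := X * derivative g - C (g.natDegree : R) * g
  have hcoeff := coeff_X_mul_derivative_sub_C_mul g g.natDegree
  have hsupp : h.support ⊆ g.support.erase g.natDegree := by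
    intro j hj
    rw [mem_support_iff, hcoeff] at hj
    exact mem_erase.mpr
      ⟨fun hjN => hj (by simp [hjN]), mem_support_iff.mpr (right_ne_zero_of_mul hj)⟩
  have hh0 : h ≠ 0 := by
    intro h0
    have hhi : h.coeff i = 0 := by rw [h0, coeff_zero]
    rw [hcoeff, mul_eq_zero, sub_eq_zero, CharP.natCast_eq_natCast R p] at hhi
    have hip : i < p := (le_natDegree_of_mem_supp i hi).trans_lt hgp
    exact hhi.elim (fun hmod => hiN (hmod.eq_of_lt_of_lt hip hgp)) (mem_support_iff.mp hi)
  have hmult : g.rootMultiplicity x - 1 ≤ h.rootMultiplicity x := by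
    rw [le_rootMultiplicity_iff hh0]
    have hdvd := g.pow_rootMultiplicity_dvd x
    exact dvd_sub (dvd_mul_of_dvd_right (pow_sub_one_dvd_derivative_of_pow_dvd hdvd) _)
      (dvd_mul_of_dvd_right ((pow_dvd_pow _ (Nat.sub_le _ 1)).trans hdvd) _)
  have hcard : #h.support < #g.support :=
    (card_le_card hsupp).trans_lt (card_erase_lt_of_mem (natDegree_mem_support_of_nonzero hg))
  have hdeg : h.natDegree < p :=
    (le_natDegree_of_mem_supp _
      (mem_of_mem_erase (hsupp (natDegree_mem_support_of_nonzero hh0)))).trans_lt hgp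
  have := ih _ hcard hh0 hdeg rfl
  omega

theorem eq_zero_of_coeff_mul_one_add_X_pow_eq_zero_on_Ico {R : Type*} [CommRing R] [IsDomain R]
    (p : ℕ) [CharP R p] {f : R[X]} {m n w : ℕ} (hf : f.natDegree < m) (hmnp : m + n ≤ p)
    (hwn : w ≤ n) (hvan : ∀ s ∈ Ico w (w + m), (f * (1 + X) ^ n).coeff s = 0) : f = 0 := by
  by_contra hf0
  have hX : (1 + X : R[X]) = X - C (-1) := by rw [map_neg, C_1, sub_neg_eq_add, add_comm]
  rw [hX] at hvan
  set e := f * (X - C (-1)) ^ n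
  have he0 : e ≠ 0 := mul_ne_zero hf0 (pow_ne_zero _ (X_sub_C_ne_zero _))
  have hdeg : e.natDegree < m + n := by
    refine natDegree_mul_le.trans_lt ?_
    rw [(monic_X_sub_C _).natDegree_pow, natDegree_X_sub_C]
    omega
  have hmult : n ≤ e.rootMultiplicity (-1) := by
    rw [rootMultiplicity_mul he0, rootMultiplicity_X_sub_C_pow]
    omega
  have hsupp : e.support ⊆ range (m + n) \ Ico w (w + m) := fun s hs =>
    mem_sdiff.mpr ⟨mem_range.mpr ((le_natDegree_of_mem_supp s hs).trans_lt hdeg),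
      fun hs' => mem_support_iff.mp hs (hvan s hs')⟩
  have hcard : #e.support ≤ n := by
    refine (card_le_card hsupp).trans ?_
    rw [card_sdiff_of_subset (fun s hs => by simp at hs ⊢; omega), card_range, Nat.card_Ico]
    omega
  have := rootMultiplicity_lt_card_support p he0 (hdeg.trans_le hmnp) (neg_ne_zero.mpr one_ne_zero)
  omega

section ResiduePart

variable {R : Type*} [CommSemiring R]

noncomputable def residuePart (d r : ℕ) (f : R[X]) : R[X] :=
  ∑ t ∈ range (f.natDegree + 1), monomial t (f.coeff (d * t + r))

theorem coeff_residuePart {d : ℕ} (hd : 0 < d) (r : ℕ) (f : R[X]) (t : ℕ) :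
    (residuePart d r f).coeff t = f.coeff (d * t + r) := by
  simp only [residuePart, finsetSum_coeff, coeff_monomial, sum_ite_eq', mem_range]
  split_ifs with ht
  · rfl
  · refine (coeff_eq_zero_of_natDegree_lt ?_).symm
    nlinarith

theorem natDegree_residuePart_lt {d m : ℕ} (hd : 0 < d) (r : ℕ) {f : R[X]}
    (hf : f.natDegree < d * m) : (residuePart d r f).natDegree < m := by
  have hm : 0 < m := Nat.pos_of_mul_pos_left (hf.trans_le' (Nat.zero_le _))
  suffices (residuePart d r f).natDegree ≤ m - 1 by omega
  refine natDegree_le_iff_coeff_eq_zero.mpr fun t ht => ?_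
  rw [coeff_residuePart hd]
  have : d * m ≤ d * t := Nat.mul_le_mul_left d (by omega)
  exact coeff_eq_zero_of_natDegree_lt (by omega)

theorem coeff_mul_expand_mul_add {d r : ℕ} (hrd : r < d) (f g : R[X]) (s : ℕ) :
    (f * expand R d g).coeff (d * s + r) = (residuePart d r f * g).coeff s := by
  induction g using Polynomial.induction_on' with
  | add g h hg hh => simp only [map_add, mul_add, coeff_add, hg, hh]
  | monomial v a =>
    rw [expand_monomial]
    simp only [← C_mul_X_pow_eq_monomial, ← mul_assoc, coeff_mul_X_pow', coeff_mul_C]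
    by_cases hvs : v ≤ s
    · obtain ⟨u, rfl⟩ := Nat.exists_eq_add_of_le hvs
      rw [if_pos (by nlinarith), if_pos hvs, coeff_residuePart (by omega),
        Nat.add_sub_cancel_left, mul_add, mul_comm v d, add_assoc, Nat.add_sub_cancel_left]
    · rw [if_neg (by nlinarith), if_neg hvs]

end ResiduePart

theorem eq_zero_of_coeff_mul_one_add_X_pow_pow_eq_zero_on_Ioc {R : Type*} [CommRing R]
    [IsDomain R] (p : ℕ) [CharP R p] {d m n : ℕ} (hd : 0 < d) (hmn : 2 * m ≤ n + 1)
    (hmnp : m + n ≤ p) {c : R[X]} (hc : c.natDegree < d * m)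
    (hvan : ∀ j ∈ Ioc (d * (m - 1)) (d * n), (c * (1 + X ^ d) ^ n).coeff j = 0) : c = 0 := by
  ext j
  rw [coeff_zero, ← Nat.div_add_mod j d, ← coeff_residuePart hd]
  suffices residuePart d (j % d) c = 0 by rw [this, coeff_zero]
  have hr : j % d < d := Nat.mod_lt _ hd
  have hexp : (1 + X ^ d : R[X]) ^ n = expand R d ((1 + X) ^ n) := by simp
  have hm : 0 < m := Nat.pos_of_mul_pos_left (hc.trans_le' (Nat.zero_le _))
  -- the `m` consecutive `s` for which `d * s + j % d` lies in `(d * (m - 1), d * n]`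
  refine eq_zero_of_coeff_mul_one_add_X_pow_eq_zero_on_Ico p
    (w := if j % d = 0 then m else m - 1) (natDegree_residuePart_lt hd _ hc) hmnp
    (by split_ifs <;> omega) fun s hs => ?_
  rw [← coeff_mul_expand_mul_add hr, ← hexp]
  refine hvan _ (mem_Ioc.mpr ?_)
  rw [mem_Ico] at hs
  have hdm : d * (m - 1) + d = d * m := by
    rw [Nat.mul_sub_one, Nat.sub_add_cancel (Nat.le_mul_of_pos_right d hm)]
  split_ifs at hs with hr0
  · have h1 : d * m ≤ d * s := Nat.mul_le_mul_left d hs.1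
    have h2 : d * s ≤ d * n := Nat.mul_le_mul_left d (by omega)
    omega
  · have h1 : d * (m - 1) ≤ d * s := Nat.mul_le_mul_left d hs.1
    have h2 : d * (s + 1) ≤ d * n := Nat.mul_le_mul_left d (by omega)
    rw [Nat.mul_succ] at h2
    omega

theorem eq_zero_of_add_mul_X_pow_eq_zero {R : Type*} [Semiring R] {a b : R[X]} {n : ℕ}
    (ha : a.natDegree < n) (h : a + b * X ^ n = 0) : a = 0 ∧ b = 0 := by
  have ha0 : a = 0 := by
    ext j
    rcases lt_or_ge j n with hj | hj
    · simpa [coeff_mul_X_pow', hj.not_ge] using congrArg (coeff · j) h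
    · exact coeff_eq_zero_of_natDegree_lt (ha.trans_le hj)
  exact ⟨ha0, mul_X_pow_eq_zero (by simpa [ha0] using h)⟩

end Polynomial

theorem Finsupp.eq_of_degree_eq_of_apply_one_eq {μ ν : Fin 2 →₀ ℕ}
    (hdeg : μ.degree = ν.degree) (h1 : μ 1 = ν 1) : μ = ν := by
  simp only [Finsupp.degree_eq_sum, Fin.sum_univ_two] at hdeg
  ext i
  fin_cases i
  · simp only [Fin.zero_eta]; omega
  · exact h1

theorem MvPolynomial.IsHomogeneous.degree_eq_of_coeff_ne_zero {σ R : Type*} [CommSemiring R]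
    {P : MvPolynomial σ R} {N : ℕ} (hP : P.IsHomogeneous N) {μ : σ →₀ ℕ}
    (hμ : P.coeff μ ≠ 0) : μ.degree = N :=
  not_imp_comm.mp hP.coeff_eq_zero hμ

section Dehomogenize

variable {R : Type*} [CommSemiring R]

variable (R) in
noncomputable def dehomogenize : MvPolynomial (Fin 2) R →ₐ[R] R[X] :=
  MvPolynomial.aeval ![1, X]

theorem coeff_dehomogenize (P : MvPolynomial (Fin 2) R) (j : ℕ) :
    (dehomogenize R P).coeff j = ∑ μ ∈ P.support with μ 1 = j, P.coeff μ := by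
  conv_lhs => rw [P.as_sum]
  rw [map_sum, finsetSum_coeff, sum_filter]
  refine sum_congr rfl fun μ _ => ?_
  rw [dehomogenize, MvPolynomial.aeval_monomial, Finsupp.prod_fintype _ _ (by simp),
    Fin.prod_univ_two]
  simp [coeff_X_pow, eq_comm]

namespace MvPolynomial.IsHomogeneous

variable {P : MvPolynomial (Fin 2) R} {N : ℕ}

theorem coeff_dehomogenize_apply_one (hP : P.IsHomogeneous N) {μ : Fin 2 →₀ ℕ}
    (hμ : μ.degree = N) : (dehomogenize R P).coeff (μ 1) = P.coeff μ := by
  rw [coeff_dehomogenize, sum_eq_single μ]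
  · intro ν hν hνμ
    rw [mem_filter, MvPolynomial.mem_support_iff] at hν
    exact absurd (Finsupp.eq_of_degree_eq_of_apply_one_eq
      ((hP.degree_eq_of_coeff_ne_zero hν.1).trans hμ.symm) hν.2) hνμ
  · intro hμP
    exact MvPolynomial.notMem_support_iff.mp fun h => hμP (mem_filter.mpr ⟨h, rfl⟩)

theorem natDegree_dehomogenize_le (hP : P.IsHomogeneous N) :
    (dehomogenize R P).natDegree ≤ N := by
  refine natDegree_le_iff_coeff_eq_zero.mpr fun j hj => ?_
  rw [coeff_dehomogenize]
  refine sum_eq_zero fun μ hμ => absurd (mem_filter.mp hμ) fun ⟨hμP, hμj⟩ => ?_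
  have := hP.degree_eq_of_coeff_ne_zero (MvPolynomial.mem_support_iff.mp hμP)
  rw [Finsupp.degree_eq_sum, Fin.sum_univ_two] at this
  omega

theorem eq_zero_of_dehomogenize_eq_zero (hP : P.IsHomogeneous N)
    (h : dehomogenize R P = 0) : P = 0 := by
  ext μ
  by_cases hμ : μ.degree = N
  · rw [← hP.coeff_dehomogenize_apply_one hμ, h, Polynomial.coeff_zero, MvPolynomial.coeff_zero]
  · rw [hP.coeff_eq_zero hμ, MvPolynomial.coeff_zero]

end MvPolynomial.IsHomogeneous

end Dehomogenize

open MvPolynomial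

theorem eq_zero_of_homogeneous_syzygy {K : Type*} [Field K] (p : ℕ) [CharP K p]
    {d m : ℕ} (hd : 2 ≤ d) (hm : 0 < m) (hp : p + 1 = 2 * (d * m))
    {A B C : MvPolynomial (Fin 2) K} (hA : A.IsHomogeneous (d * (m - 1)))
    (hB : B.IsHomogeneous (d * (m - 1))) (hC : C.IsHomogeneous (d * m - 1))
    (hsyz : A * X 0 ^ p + B * X 1 ^ p + C * (X 0 ^ d + X 1 ^ d) ^ (2 * m - 1) = 0) :
    A = 0 ∧ B = 0 ∧ C = 0 := by
  have hdm : d * (m - 1) = d * m - d := Nat.mul_sub_one d m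
  have hdk : d * (2 * m - 1) = 2 * (d * m) - d := by rw [Nat.mul_sub_one, mul_left_comm]
  have hd_le : d ≤ d * m := Nat.le_mul_of_pos_right d hm
  have h4m : 4 * m ≤ 2 * (d * m) := by nlinarith
  have hsyz' : dehomogenize K A + dehomogenize K B * Polynomial.X ^ p +
      dehomogenize K C * (1 + Polynomial.X ^ d) ^ (2 * m - 1) = 0 := by
    simpa [dehomogenize] using congrArg (dehomogenize K) hsyz
  have ha_deg := hA.natDegree_dehomogenize_le
  have hc : dehomogenize K C = 0 := by
    refine Polynomial.eq_zero_of_coeff_mul_one_add_X_pow_pow_eq_zero_on_Ioc p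
      (d := d) (m := m) (n := 2 * m - 1) (by omega) (by omega) (by omega)
      (hC.natDegree_dehomogenize_le.trans_lt (by omega)) fun j hj => ?_
    rw [mem_Ioc] at hj
    simpa [Polynomial.coeff_eq_zero_of_natDegree_lt (ha_deg.trans_lt hj.1),
      Polynomial.coeff_mul_X_pow', show ¬ p ≤ j by omega]
      using congrArg (Polynomial.coeff · j) hsyz'
  rw [hc, zero_mul, add_zero] at hsyz'
  obtain ⟨ha, hb⟩ :=
    Polynomial.eq_zero_of_add_mul_X_pow_eq_zero (ha_deg.trans_lt (by omega)) hsyz'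
  exact ⟨hA.eq_zero_of_dehomogenize_eq_zero ha, hB.eq_zero_of_dehomogenize_eq_zero hb,
    hC.eq_zero_of_dehomogenize_eq_zero hc⟩

theorem no_syzygy_below_initial_degree_general (K : Type*) [Field K] (d : ℕ) (hd : 2 ≤ d)
    (p : ℕ) (hpd : 2 * d ∣ p + 1) [CharP K p]
    (k : ℕ) (hk : k = (p + 1) / d - 1)
    (A B C : MvPolynomial (Fin 2) K)
    (hA : A.IsHomogeneous ((3 * d * k + d) / 2 - 1 - p))
    (hB : B.IsHomogeneous ((3 * d * k + d) / 2 - 1 - p))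
    (hC : C.IsHomogeneous ((d * k + d) / 2 - 1))
    (hsyz : A * X 0 ^ p + B * X 1 ^ p + C * (X 0 ^ d + X 1 ^ d) ^ k = 0) :
    A = 0 ∧ B = 0 ∧ C = 0 := by
  obtain ⟨m, hm⟩ := hpd
  rw [mul_assoc] at hm
  have hm0 : 0 < m := Nat.pos_of_ne_zero (by rintro rfl; simp at hm)
  have hk' : k = 2 * m - 1 := by
    rw [hk, hm, mul_left_comm, Nat.mul_div_cancel_left _ (by omega)]
  have hdk : d * k = 2 * (d * m) - d := by rw [hk', Nat.mul_sub_one, mul_left_comm]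
  have hdm : d * (m - 1) = d * m - d := Nat.mul_sub_one d m
  have hd_le : d ≤ d * m := Nat.le_mul_of_pos_right d hm0
  rw [mul_assoc 3, show (3 * (d * k) + d) / 2 - 1 - p = d * (m - 1) by omega] at hA hB
  rw [show (d * k + d) / 2 - 1 = d * m - 1 by omega] at hC
  rw [hk'] at hsyz
  exact eq_zero_of_homogeneous_syzygy p hd hm0 hm hA hB hC hsyz

/-- The vanishing `Γ(C, S_k((3dk+d)/2 - 1)) = 0` from Step 1 of the proof of the main
theorem: in characteristic `p ≡ -1 (mod 2d)`, with `k = (p+1)/d - 1`, every homogeneous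
syzygy of `(X^p, Y^p, (X^d+Y^d)^k)` of total degree `(3dk+d)/2 - 1` (component degrees
`(3dk+d)/2 - 1 - p`, `(3dk+d)/2 - 1 - p`, `(dk+d)/2 - 1`) is trivial. -/
theorem no_syzygy_below_initial_degree (K : Type*) [Field K] (d : ℕ) (hd : 2 ≤ d)
    (p : ℕ) (hp : p.Prime) (hpd : 2 * d ∣ p + 1) [CharP K p]
    (k : ℕ) (hk : k = (p + 1) / d - 1)
    (A B C : MvPolynomial (Fin 2) K)
    (hA : A.IsHomogeneous ((3 * d * k + d) / 2 - 1 - p))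
    (hB : B.IsHomogeneous ((3 * d * k + d) / 2 - 1 - p))
    (hC : C.IsHomogeneous ((d * k + d) / 2 - 1))
    (hsyz : A * X 0 ^ p + B * X 1 ^ p + C * (X 0 ^ d + X 1 ^ d) ^ k = 0) :
    A = 0 ∧ B = 0 ∧ C = 0 :=
  no_syzygy_below_initial_degree_general K d hd p hpd k hk A B C hA hB hC hsyz
end

section
/- Let (R, m) be a Noetherian local domain of prime characteristic p, let e ≥ 1 be an integer, and let F^e: R → R denote the e-th iterate of the Frobenius endomorphism r ↦ r^{p^e}. Let M be a finitely generated R-module. If M is isomorphic as an R-module to the base change M ⊗_{R, F^e} R of M along F^e, then M is a free R-module. -/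
/-!
Let `φ : R^n → M` be a minimal presentation and `J ⊆ 𝔪` the ideal generated by the entries of
its relations. Pulling `φ` back along `F^e` and composing with `F^e* M ≅ M` gives a surjection
`R^n → M` whose relations have entries in `J^[q]`, `q = p^e`. A minimal presentation factors
through any other surjection `R^n → M` by an endomorphism of `R^n` that is surjective by
Nakayama, so its relations lie in `J^[q] R^n`. Hence `J ⊆ J^[q] ⊆ J^2 ⊆ 𝔪 J`, so `J = 0` by
Nakayama and `φ` is an isomorphism.
-/

noncomputable section

/-- `R` regarded as an `R`-algebra via a ring endomorphism `f : R →+* R`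
(type synonym). -/
def FrobAlg (R : Type*) [CommRing R] (_f : R →+* R) : Type _ := R

instance (R : Type*) [CommRing R] (f : R →+* R) : CommRing (FrobAlg R f) :=
  inferInstanceAs (CommRing R)

/-- The identity map, viewed as a ring homomorphism `R →+* FrobAlg R f`. -/
def FrobAlg.fromBase (R : Type*) [CommRing R] (f : R →+* R) : R →+* FrobAlg R f :=
  RingHom.id R

/-- The structure morphism of `FrobAlg R f`: the map `f` itself. -/
def FrobAlg.structureMap (R : Type*) [CommRing R] (f : R →+* R) : R →+* FrobAlg R f := f

instance (R : Type*) [CommRing R] (f : R →+* R) : Algebra R (FrobAlg R f) :=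
  (FrobAlg.structureMap R f).toAlgebra

/-- The pull-back `M ⊗_{R,f} R` of an `R`-module `M` along a ring endomorphism
`f : R →+* R`: the tensor product of `M` with `R`, where `R` is regarded as an
`R`-algebra via `f`. Its `R`-module structure comes from the plain ring structure of
the `R`-factor. -/
def FrobPull (R : Type*) [CommRing R] (f : R →+* R) (M : Type*) [AddCommGroup M]
    [Module R M] : Type _ :=
  TensorProduct R (FrobAlg R f) M

instance (R : Type*) [CommRing R] (f : R →+* R) (M : Type*) [AddCommGroup M]
    [Module R M] : AddCommGroup (FrobPull R f M) :=
  inferInstanceAs (AddCommGroup (TensorProduct R (FrobAlg R f) M))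

instance (R : Type*) [CommRing R] (f : R →+* R) (M : Type*) [AddCommGroup M]
    [Module R M] : Module (FrobAlg R f) (FrobPull R f M) :=
  inferInstanceAs (Module (FrobAlg R f) (TensorProduct R (FrobAlg R f) M))

instance (R : Type*) [CommRing R] (f : R →+* R) (M : Type*) [AddCommGroup M]
    [Module R M] : Module R (FrobPull R f M) :=
  Module.compHom _ (FrobAlg.fromBase R f)

open Function TensorProduct LinearMap IsLocalRing

section EntryIdeal

variable {R : Type*} [CommRing R] {ι : Type*} [Fintype ι]

lemma mem_smul_top_pi_iff {I : Ideal R} {v : ι → R} :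
    v ∈ I • (⊤ : Submodule R (ι → R)) ↔ ∀ i, v i ∈ I := by
  classical
  refine ⟨fun hv i ↦ ?_, fun hv ↦ ?_⟩
  · refine Submodule.smul_induction_on hv (fun r hr x _ ↦ ?_) (fun x y hx hy ↦ ?_)
    · exact I.mul_mem_right _ hr
    · exact I.add_mem hx hy
  · rw [← Finset.univ_sum_single v]
    refine Submodule.sum_mem _ fun i _ ↦ ?_
    rw [show Pi.single i (v i) = v i • Pi.single i (1 : R) by
      rw [← Pi.single_smul, smul_eq_mul, mul_one]]
    exact Submodule.smul_mem_smul (hv i) Submodule.mem_top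

/-- For the kernel of a minimal presentation `R^n → M` this is the Fitting ideal `Fitt_{n-1}(M)`,
the ideal of `1 × 1` minors of a relation matrix. -/
def Submodule.entryIdeal (K : Submodule R (ι → R)) : Ideal R :=
  ⨆ i, K.map (LinearMap.proj i)

lemma Submodule.entryIdeal_le_iff {K : Submodule R (ι → R)} {I : Ideal R} :
    K.entryIdeal ≤ I ↔ K ≤ I • ⊤ := by
  simp_rw [entryIdeal, iSup_le_iff, Submodule.map_le_iff_le_comap, SetLike.le_def,
    Submodule.mem_comap, proj_apply, mem_smul_top_pi_iff]
  exact ⟨fun h _ hv i ↦ h i hv, fun h i _ hv ↦ h hv i⟩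

lemma Submodule.le_entryIdeal_smul_top (K : Submodule R (ι → R)) : K ≤ K.entryIdeal • ⊤ :=
  entryIdeal_le_iff.mp le_rfl

end EntryIdeal

section LocalRing

variable {R : Type*} [CommRing R] [IsLocalRing R] {M : Type*} [AddCommGroup M] [Module R M]

lemma exists_surjective_ker_le_maximalIdeal_smul_top [Module.Finite R M] :
    ∃ (n : ℕ) (φ : (Fin n → R) →ₗ[R] M), Surjective φ ∧ ker φ ≤ maximalIdeal R • ⊤ := by
  let b := Module.finBasis (ResidueField R) (ResidueField R ⊗[R] M)
  choose g hg using fun i ↦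
    TensorProduct.mk_surjective R M (ResidueField R) residue_surjective (b i)
  refine ⟨_, Fintype.linearCombination R g, ?_, fun v hv ↦ mem_smul_top_pi_iff.mpr fun i ↦ ?_⟩
  · rw [← range_eq_top, Fintype.range_linearCombination]
    exact span_eq_top_of_tmul_eq_basis g b hg
  · have hres : ∑ j, residue R (v j) • b j = 0 := by
      have := congrArg (TensorProduct.mk R (ResidueField R) M 1) hv
      simpa [Fintype.linearCombination_apply, ← hg, TensorProduct.tmul_sum, TensorProduct.tmul_smul,
        TensorProduct.smul_tmul', ← Algebra.algebraMap_eq_smul_one] using this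
    exact (residue_eq_zero_iff _).mp (Fintype.linearIndependent_iff.mp b.linearIndependent _ hres i)

variable {ι : Type*} [Fintype ι]

lemma ker_le_smul_top_of_ker_le_maximalIdeal_smul_top {φ ψ : (ι → R) →ₗ[R] M}
    (hφ : Surjective φ) (hφm : ker φ ≤ maximalIdeal R • ⊤) (hψ : Surjective ψ)
    {I : Ideal R} (hψI : ker ψ ≤ I • ⊤) : ker φ ≤ I • ⊤ := by
  obtain ⟨w, hφw⟩ := Module.projective_lifting_property φ ψ hφ
  have hw : Surjective w := by
    refine range_eq_top.mp (eq_top_iff.mpr (Submodule.le_of_le_smul_of_le_jacobson_bot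
      Module.Finite.fg_top (maximalIdeal_le_jacobson ⊥) ?_))
    rintro x -
    obtain ⟨y, hy⟩ := hψ (φ x)
    have hxy : x - w y ∈ ker φ := by
      rw [mem_ker, map_sub, ← LinearMap.comp_apply, hφw, hy, sub_self]
    rw [← add_sub_cancel (w y) x]
    exact Submodule.add_mem_sup (mem_range_self w y) (hφm hxy)
  intro x hx
  obtain ⟨y, rfl⟩ := hw x
  have hy : y ∈ ker ψ := by rwa [← hφw, mem_ker, LinearMap.comp_apply]
  have := Submodule.mem_map_of_mem (f := w) (hψI hy)
  rw [Submodule.map_smul'', Submodule.map_top, range_eq_top.mpr hw] at this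
  exact this

end LocalRing

section BaseChange

variable {R S : Type*} [CommRing R] [CommRing S] [Algebra R S] {ι : Type*} [Fintype ι]
  [DecidableEq ι] {M : Type*} [AddCommGroup M] [Module R M]

def LinearMap.baseChangePi (ψ : (ι → R) →ₗ[R] M) : (ι → S) →ₗ[S] S ⊗[R] M :=
  ψ.baseChange S ∘ₗ (piScalarRight R S S ι).symm.toLinearMap

variable {ψ : (ι → R) →ₗ[R] M}

lemma LinearMap.baseChangePi_surjective (hψ : Surjective ψ) :
    Surjective (ψ.baseChangePi (S := S)) := by
  rw [baseChangePi, coe_comp, baseChange_eq_ltensor]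
  exact (lTensor_surjective S hψ).comp (LinearEquiv.surjective _)

lemma LinearMap.ker_baseChangePi_le (hψ : Surjective ψ) {I : Ideal R} (hI : ker ψ ≤ I • ⊤) :
    ker (ψ.baseChangePi (S := S)) ≤ I.map (algebraMap R S) • ⊤ := by
  intro x hx
  obtain ⟨y, hy⟩ : ∃ y, lTensor S (ker ψ).subtype y = (piScalarRight R S S ι).symm x :=
    (lTensor_exact S (exact_subtype_ker_map ψ) hψ _).mp
      (by simpa [baseChangePi, baseChange_eq_ltensor] using hx)
  rw [← (piScalarRight R S S ι).apply_symm_apply x, ← hy]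
  clear hx hy
  induction y with
  | zero => simp
  | tmul s k =>
    refine mem_smul_top_pi_iff.mpr fun i ↦ ?_
    simp only [lTensor_tmul, piScalarRight_apply, piScalarRightHom_tmul, Submodule.subtype_apply,
      Algebra.smul_def]
    exact Ideal.mul_mem_right _ _ (Ideal.mem_map_of_mem _ (mem_smul_top_pi_iff.mp (hI k.2) i))
  | add y z hy hz =>
    rw [map_add, map_add]
    exact add_mem hy hz

end BaseChange

section FrobPull

variable {R : Type*} [CommRing R] (f : R →+* R) {ι : Type*} [Fintype ι] [DecidableEq ι]
  {M : Type*} [AddCommGroup M] [Module R M]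

/-- `FrobAlg R f` is `R` as a ring, so the `FrobAlg R f`-linear base change is `R`-linear. -/
def LinearMap.frobPull (ψ : (ι → R) →ₗ[R] M) : (ι → R) →ₗ[R] FrobPull R f M where
  toFun := ψ.baseChangePi (S := FrobAlg R f)
  map_add' := map_add _
  map_smul' r := map_smul (ψ.baseChangePi (S := FrobAlg R f)) (FrobAlg.fromBase R f r)

variable {ψ : (ι → R) →ₗ[R] M}

lemma LinearMap.frobPull_surjective (hψ : Surjective ψ) : Surjective (ψ.frobPull f) :=
  baseChangePi_surjective (S := FrobAlg R f) hψ

lemma LinearMap.ker_frobPull_le (hψ : Surjective ψ) {I : Ideal R} (hI : ker ψ ≤ I • ⊤) :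
    ker (ψ.frobPull f) ≤ I.map f • ⊤ := fun _ hx ↦ mem_smul_top_pi_iff.mpr <|
  mem_smul_top_pi_iff.mp (ker_baseChangePi_le (S := FrobAlg R f) hψ hI hx)

end FrobPull

lemma Ideal.map_iterateFrobenius_le_pow {R : Type*} [CommRing R] (p e : ℕ) [ExpChar R p]
    (I : Ideal R) : I.map (iterateFrobenius R p e) ≤ I ^ p ^ e :=
  Ideal.map_le_iff_le_comap.mpr fun x hx ↦ by
    simpa [_root_.iterateFrobenius_def] using Ideal.pow_mem_pow hx (p ^ e)

theorem frobenius_periodic_module_is_free_general (R : Type*) [CommRing R]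
    [IsNoetherianRing R] [IsLocalRing R] (p : ℕ) [Fact p.Prime] [CharP R p]
    (e : ℕ) (he : 1 ≤ e)
    (M : Type*) [AddCommGroup M] [Module R M] [Module.Finite R M]
    (h : Nonempty (M ≃ₗ[R] FrobPull R (iterateFrobenius R p e) M)) :
    Module.Free R M := by
  obtain ⟨h⟩ := h
  set f := iterateFrobenius R p e
  obtain ⟨n, φ, hφ, hφm⟩ := exists_surjective_ker_le_maximalIdeal_smul_top (R := R) (M := M)
  set J := (ker φ).entryIdeal
  have hJm : J ≤ maximalIdeal R := Submodule.entryIdeal_le_iff.mpr hφm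
  have hψ : Surjective (h.symm.toLinearMap ∘ₗ φ.frobPull f) :=
    h.symm.surjective.comp (φ.frobPull_surjective f hφ)
  have hψJ : ker (h.symm.toLinearMap ∘ₗ φ.frobPull f) ≤ J.map f • ⊤ := by
    rw [LinearEquiv.ker_comp]
    exact φ.ker_frobPull_le f hφ (ker φ).le_entryIdeal_smul_top
  have hq : 2 ≤ p ^ e := (Fact.out : p.Prime).two_le.trans (Nat.le_self_pow (by omega) p)
  have hJ : J ≤ maximalIdeal R • J := calc
    J ≤ J.map f := Submodule.entryIdeal_le_iff.mpr
          (ker_le_smul_top_of_ker_le_maximalIdeal_smul_top hφ hφm hψ hψJ)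
    _ ≤ J ^ p ^ e := J.map_iterateFrobenius_le_pow p e
    _ ≤ J ^ 2 := Ideal.pow_le_pow_right hq
    _ ≤ maximalIdeal R • J := by rw [sq, smul_eq_mul]; exact Ideal.mul_mono_left hJm
  have hJ_bot : J = ⊥ := Submodule.eq_bot_of_le_smul_of_le_jacobson_bot _ _
    (IsNoetherian.noetherian J) hJ (maximalIdeal_le_jacobson ⊥)
  have hφ_inj : Injective φ := by
    rw [← ker_eq_bot, eq_bot_iff]
    simpa only [J, hJ_bot, Submodule.bot_smul] using (ker φ).le_entryIdeal_smul_top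
  exact Module.Free.of_equiv (LinearEquiv.ofBijective φ ⟨hφ_inj, hφ⟩)

/-- A finitely generated module over a Noetherian local domain of prime characteristic `p`
that is isomorphic to its pull-back along the `e`-th iterate of the Frobenius (for some
`e ≥ 1`) is free (final remark of the paper). -/
theorem frobenius_periodic_module_is_free (R : Type*) [CommRing R] [IsDomain R]
    [IsNoetherianRing R] [IsLocalRing R] (p : ℕ) [Fact p.Prime] [CharP R p]
    (e : ℕ) (he : 1 ≤ e)
    (M : Type*) [AddCommGroup M] [Module R M] [Module.Finite R M]
    (h : Nonempty (M ≃ₗ[R] FrobPull R (iterateFrobenius R p e) M)) :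
    Module.Free R M :=
  frobenius_periodic_module_is_free_general R p e he M h
end
end

section
/- Let d ≥ 2 be an integer, let p be a prime number with p ≡ −1 (mod 2d), let K be a field of characteristic p, and let I = (X^d + Y^d − Z^d) ⊆ K[X,Y,Z]. Then there exist homogeneous polynomials F, G, H ∈ K[X,Y,Z], each of degree (p+1)/2, such that F·X^p + G·Y^p + H·Z^p ∈ I and such that not all of F, G, H lie in I. -/
/-! Write `q = (p + 1) / 2` and `p + 1 = 2de`, and let `W = (X^d + Y^d)^{2e}` in `K[X,Y]`. Triples
`(A, B, C)` of forms of degrees `q, q, q - 1` form a space of dimension `3q + 2`, while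
`A X^p + B Y^p + C W` lies among the forms of degree `p + q`, a space of dimension `3q`; so there
is a nonzero syzygy, and `(A, B) ≠ 0` because `W ≠ 0`. With `F = A`, `G = B`, `H = Z C` we get
`F X^p + G Y^p + H Z^p = C ((Z^d)^{2e} - W)`, a multiple of `Z^d - (X^d + Y^d)`. On the other hand
a nonzero polynomial not involving `Z` has `Z`-degree `0 < d`, so it is not a multiple of
`X^d + Y^d - Z^d`; hence `F` or `G` lies outside the ideal. -/

open MvPolynomial Module

instance MvPolynomial.finite_homogeneousSubmodule {σ R : Type*} [Finite σ] [CommSemiring R]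
    (n : ℕ) : Module.Finite R (homogeneousSubmodule σ R n) :=
  Module.Finite.iff_fg.mpr (homogeneousSubmodule_fg σ R n)

theorem MvPolynomial.finrank_homogeneousSubmodule {σ K : Type*} [Fintype σ] [Field K] (n : ℕ) :
    finrank K (homogeneousSubmodule σ K n) = (Fintype.card σ).multichoose n := by
  classical
  have hset :
      {m : σ →₀ ℕ | m.degree = n} = ↑((Finset.univ : Finset σ).finsuppAntidiag n) := by
    ext m
    simp [Finsupp.degree_eq_sum]
  rw [homogeneousSubmodule_eq_finsupp_supported, hset, ← restrictSupport,
    finrank_eq_card_basis (basisRestrictSupport K _)]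
  simp [Finset.card_finsuppAntidiag_nat_eq_multichoose]

theorem MvPolynomial.exists_ne_zero_sum_mul_eq_zero_of_finrank_lt {ι σ K : Type*} [Fintype ι]
    [Fintype σ] [Field K] {f : ι → MvPolynomial σ K} {a : ι → ℕ} {n : ℕ}
    (hf : ∀ i, (f i).IsHomogeneous (a i)) (ha : ∀ i, a i ≤ n)
    (hlt : finrank K (homogeneousSubmodule σ K n) <
      ∑ i, finrank K (homogeneousSubmodule σ K (n - a i))) :
    ∃ g : ι → MvPolynomial σ K, (∀ i, (g i).IsHomogeneous (n - a i)) ∧ g ≠ 0 ∧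
      ∑ i, g i * f i = 0 := by
  let φ : (Π i, homogeneousSubmodule σ K (n - a i)) →ₗ[K] homogeneousSubmodule σ K n :=
    LinearMap.codRestrict _
      (∑ i, LinearMap.mulRight K (f i) ∘ₗ (Submodule.subtype _) ∘ₗ LinearMap.proj i)
      fun x ↦ by
        rw [LinearMap.sum_apply]
        refine Submodule.sum_mem _ fun i _ ↦ ?_
        simpa [Nat.sub_add_cancel (ha i)] using (x i).2.mul (hf i)
  obtain ⟨x, hx, hx0⟩ := Submodule.exists_mem_ne_zero_of_ne_bot
    (LinearMap.ker_ne_bot_of_finrank_lt (f := φ) (by rwa [finrank_pi_fintype]))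
  refine ⟨fun i ↦ x i, fun i ↦ (x i).2,
    fun h ↦ hx0 <| _root_.funext fun i ↦ Subtype.ext (congrFun h i), ?_⟩
  simpa [φ] using congrArg Subtype.val (LinearMap.mem_ker.mp hx)

theorem MvPolynomial.exists_syzygy_X_pow_X_pow {K : Type*} [Field K] {p q : ℕ}
    {W : MvPolynomial (Fin 2) K} (hW : W.IsHomogeneous (p + 1)) (hW0 : W ≠ 0) (hq : 1 ≤ q)
    (hpq : p ≤ 2 * q) :
    ∃ A B C : MvPolynomial (Fin 2) K, A.IsHomogeneous q ∧ B.IsHomogeneous q ∧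
      C.IsHomogeneous (q - 1) ∧ ¬(A = 0 ∧ B = 0) ∧
      A * X 0 ^ p + B * X 1 ^ p + C * W = 0 := by
  obtain ⟨g, hg, hg0, hsum⟩ := exists_ne_zero_sum_mul_eq_zero_of_finrank_lt
    (f := ![X 0 ^ p, X 1 ^ p, W]) (a := ![p, p, p + 1]) (n := p + q)
    (fun i ↦ by fin_cases i <;> simp [isHomogeneous_X_pow, hW])
    (fun i ↦ by fin_cases i <;> simp; omega)
    (by simp [finrank_homogeneousSubmodule, Fin.sum_univ_three]; omega)
  simp only [Fin.sum_univ_three] at hsum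
  refine ⟨g 0, g 1, g 2, by simpa using hg 0, by simpa using hg 1,
    by simpa [Nat.sub_add_eq] using hg 2, ?_, by simpa using hsum⟩
  rintro ⟨hA, hB⟩
  have hC : g 2 = 0 := by simpa [hA, hB, hW0] using hsum
  exact hg0 (_root_.funext fun i ↦ by fin_cases i <;> assumption)

theorem MvPolynomial.eq_zero_of_dvd_of_degreeOf_lt {σ R : Type*} [CommSemiring R]
    [NoZeroDivisors R] {P Q : MvPolynomial σ R} {i : σ} (hdvd : Q ∣ P)
    (hlt : P.degreeOf i < Q.degreeOf i) : P = 0 := by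
  obtain ⟨c, rfl⟩ := hdvd
  by_contra hP
  rw [degreeOf_mul_eq (left_ne_zero_of_mul hP) (right_ne_zero_of_mul hP)] at hlt
  omega

theorem MvPolynomial.degreeOf_rename_eq_zero {σ τ R : Type*} [CommSemiring R] {f : σ → τ}
    {i : τ} (hi : i ∉ Set.range f) (P : MvPolynomial σ R) : (rename f P).degreeOf i = 0 := by
  by_contra h
  obtain ⟨j, -, rfl⟩ := mem_vars_rename f P (mem_vars_iff_degreeOf_ne_zero.mpr h)
  exact hi ⟨j, rfl⟩

theorem eq_zero_of_rename_mem_span_fermat {K : Type*} [Field K] {d : ℕ} (hd : d ≠ 0)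
    {P : MvPolynomial (Fin 2) K}
    (hP : rename Fin.castSucc P ∈
      Ideal.span {(X 0 ^ d + X 1 ^ d - X 2 ^ d : MvPolynomial (Fin 3) K)}) :
    P = 0 := by
  have hdeg : (X 0 ^ d + X 1 ^ d - X 2 ^ d : MvPolynomial (Fin 3) K).degreeOf 2 = d := by
    rw [sub_eq_neg_add, degreeOf_add_eq_of_degreeOf_lt] <;>
      rw [degreeOf_neg, degreeOf_X_self_pow]
    calc (X 0 ^ d + X 1 ^ d : MvPolynomial (Fin 3) K).degreeOf 2
        ≤ max ((X 0 ^ d : MvPolynomial (Fin 3) K).degreeOf 2) ((X 1 ^ d).degreeOf 2) :=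
          degreeOf_add_le _ _ _
      _ < d := by
          rw [degreeOf_X_pow_of_ne _ (by decide), degreeOf_X_pow_of_ne _ (by decide)]
          omega
  refine rename_injective _ (Fin.castSucc_injective 2) ?_
  rw [map_zero]
  refine eq_zero_of_dvd_of_degreeOf_lt (i := 2) (Ideal.mem_span_singleton.mp hP) ?_
  rw [degreeOf_rename_eq_zero (Fin.range_castSucc ▸ by simp), hdeg]
  omega

theorem nontrivial_syzygy_in_initial_degree_general (K : Type*) [Field K] (d : ℕ)
    (p : ℕ) (hpd : 2 * d ∣ p + 1)
    (I : Ideal (MvPolynomial (Fin 3) K))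
    (hI : I = Ideal.span {X 0 ^ d + X 1 ^ d - X 2 ^ d}) :
    ∃ F G H : MvPolynomial (Fin 3) K,
      F.IsHomogeneous ((p + 1) / 2) ∧ G.IsHomogeneous ((p + 1) / 2) ∧
      H.IsHomogeneous ((p + 1) / 2) ∧
      F * X 0 ^ p + G * X 1 ^ p + H * X 2 ^ p ∈ I ∧
      ¬(F ∈ I ∧ G ∈ I ∧ H ∈ I) := by
  set q := (p + 1) / 2
  have hq : 2 * q = p + 1 :=
    Nat.two_mul_div_two_of_even (even_iff_two_dvd.mpr ((dvd_mul_right 2 d).trans hpd))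
  obtain ⟨e, he⟩ := hpd
  have hd : d ≠ 0 := by rintro rfl; simp at he
  have hde : p + 1 = d * (2 * e) := by rw [he]; ring
  have hW : ((X 0 ^ d + X 1 ^ d) ^ (2 * e) : MvPolynomial (Fin 2) K).IsHomogeneous (p + 1) :=
    hde ▸ ((isHomogeneous_X_pow _ _).add (isHomogeneous_X_pow _ _)).pow _
  have hW0 : ((X 0 ^ d + X 1 ^ d) ^ (2 * e) : MvPolynomial (Fin 2) K) ≠ 0 :=
    pow_ne_zero _ fun h ↦ by simpa [hd] using congrArg (eval ![1, 0]) h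
  obtain ⟨A, B, C, hA, hB, hC, hAB, hsyz⟩ :=
    exists_syzygy_X_pow_X_pow hW hW0 (q := q) (by omega) (by omega)
  replace hsyz := congrArg (rename (Fin.castSucc : Fin 2 → Fin 3)) hsyz
  simp only [map_add, map_mul, map_pow, map_zero, rename_X, Fin.castSucc_zero,
    Fin.castSucc_one] at hsyz
  refine ⟨rename Fin.castSucc A, rename Fin.castSucc B, X 2 * rename Fin.castSucc C,
    hA.rename_isHomogeneous, hB.rename_isHomogeneous, ?_, ?_, ?_⟩
  · simpa [show 1 + (q - 1) = q by omega] using (isHomogeneous_X K 2).mul hC.rename_isHomogeneous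
  · have hZ : (X 2 : MvPolynomial (Fin 3) K) * X 2 ^ p = (X 2 ^ d) ^ (2 * e) := by
      rw [← pow_succ', ← pow_mul, hde]
    have hdvd :=
      sub_dvd_pow_sub_pow (X 2 ^ d : MvPolynomial (Fin 3) K) (X 0 ^ d + X 1 ^ d) (2 * e)
    rw [← neg_dvd, neg_sub] at hdvd
    rw [hI, Ideal.mem_span_singleton]
    convert hdvd.mul_left (rename Fin.castSucc C) using 1
    linear_combination hsyz + rename Fin.castSucc C * hZ
  · rintro ⟨hF, hG, -⟩
    rw [hI] at hF hG
    exact hAB ⟨eq_zero_of_rename_mem_span_fermat hd hF, eq_zero_of_rename_mem_span_fermat hd hG⟩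

/-- Step 1 of the proof of the main theorem: in characteristic `p ≡ -1 (mod 2d)` there is a
non-trivial homogeneous syzygy of `(X^p, Y^p, Z^p)` of total degree `(3p+1)/2` on the Fermat
curve of degree `d`: homogeneous `F, G, H` of degree `(p+1)/2` with
`F·X^p + G·Y^p + H·Z^p ∈ (X^d + Y^d - Z^d)` and not all of `F, G, H` in the ideal. -/
theorem nontrivial_syzygy_in_initial_degree (K : Type*) [Field K] (d : ℕ) (hd : 2 ≤ d)
    (p : ℕ) (hp : p.Prime) (hpd : 2 * d ∣ p + 1) [CharP K p]
    (I : Ideal (MvPolynomial (Fin 3) K))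
    (hI : I = Ideal.span {X 0 ^ d + X 1 ^ d - X 2 ^ d}) :
    ∃ F G H : MvPolynomial (Fin 3) K,
      F.IsHomogeneous ((p + 1) / 2) ∧ G.IsHomogeneous ((p + 1) / 2) ∧
      H.IsHomogeneous ((p + 1) / 2) ∧
      F * X 0 ^ p + G * X 1 ^ p + H * X 2 ^ p ∈ I ∧
      ¬(F ∈ I ∧ G ∈ I ∧ H ∈ I) :=
  nontrivial_syzygy_in_initial_degree_general K d p hpd I hI
end
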